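/- arXiv:2102.06961 — 2 statements merged into one kernel-verified Lean document; each statement's English description precedes it below -/
import Mathlib

section
/- In the MountainCar environment, the transition dynamics for agent n with gravity parameter g_n are: s'₁ = s₁ + s₂ − (g_n·cos(3s₁))/2 + a/2 and s'₂ = s₂ − g_n·cos(3s₁) + a, where (s₁, s₂) is the state and a the action. Then there exist vectors u(n), w(a) ∈ ℝ³ and v(s,1), v(s,2) ∈ ℝ³ — with u depending only on g_n, w only on a, and v(·,d) only on s — such that s'_d = Σ_{ℓ=1}^{3} u_ℓ(n)·v_ℓ(s,d)·w_ℓ(a) for d ∈ {1,2}. Explicitly, u(n) = (1, g_n, 1), w(a) = (1, 1, a), v(s,1) = (s₁+s₂, −cos(3s₁)/2, 1/2), and v(s,2) = (s₂, −cos(3s₁), 1) work. -/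
open scoped BigOperators

/-- Proposition 1 of the PerSim paper: the MountainCar transition dynamics admit an
exact rank-3 (agent × state × action) separable factorization, with the explicit
factors `u(n) = (1, gₙ, 1)`, `w(a) = (1, 1, a)`, `v(s,1) = (s₁+s₂, −cos(3s₁)/2, 1/2)`,
`v(s,2) = (s₂, −cos(3s₁), 1)`. -/
theorem mountainCar_rank_three :
    ∃ (u : ℝ → Fin 3 → ℝ) (w : ℝ → Fin 3 → ℝ) (v : ℝ → ℝ → Fin 2 → Fin 3 → ℝ),
      (∀ g, u g = ![1, g, 1]) ∧
      (∀ a, w a = ![1, 1, a]) ∧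
      (∀ s1 s2, v s1 s2 0 = ![s1 + s2, -Real.cos (3 * s1) / 2, 1 / 2] ∧
                v s1 s2 1 = ![s2, -Real.cos (3 * s1), 1]) ∧
      (∀ g s1 s2 a,
        (s1 + s2 - g * Real.cos (3 * s1) / 2 + a / 2 =
          ∑ ℓ : Fin 3, u g ℓ * v s1 s2 0 ℓ * w a ℓ) ∧
        (s2 - g * Real.cos (3 * s1) + a =
          ∑ ℓ : Fin 3, u g ℓ * v s1 s2 1 ℓ * w a ℓ)) := by
  refine ⟨fun g => ![1, g, 1], fun a => ![1, 1, a],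
    fun s1 s2 => ![![s1 + s2, -Real.cos (3 * s1) / 2, 1 / 2],
                   ![s2, -Real.cos (3 * s1), 1]],
    fun g => rfl, fun a => rfl, fun s1 s2 => ⟨rfl, rfl⟩, fun g s1 s2 a => ?_⟩
  constructor <;> simp [Fin.sum_univ_three] <;> ring
end

section
/- Let f : [0,1]^{d1}×[0,1]^{d2}×[0,1]^{d3} → ℝ be L-Lipschitz (sum of Euclidean norms). The minimal rank r(ε) needed so that some separable function of rank r(ε) approximates f uniformly within ε satisfies r(ε) ≤ C·(L/ε)^{d1+d3} for all ε ∈ (0, L], where C depends only on d1, d3. -/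
open scoped BigOperators

/-- membership in the unit cube `[0,1]^d`. -/
def inCube {d : ℕ} (x : EuclideanSpace ℝ (Fin d)) : Prop := ∀ i, 0 ≤ x i ∧ x i ≤ 1

/-!
Cut `[0,1]^d` into `(n+1)^d` cubes of side `1/(n+1)` and replace `θ` and `ω` by the centres of
their cells. The function `f (c θ) ρ (c ω)` is separable with one term per pair of cells
(indicator of the `θ`-cell, `f` at the two centres, indicator of the `ω`-cell), so its rank is
`(n+1)^(d1+d3)`, and the Lipschitz bound puts it within `L (√d1 + √d3) / (2 (n+1))` of `f`.
Taking `n = ⌈(√d1 + √d3) L / ε⌉` gives the claim with `C = (√d1 + √d3 + 2)^(d1+d3)`.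
-/

/-- `Fin.clamp` puts `t = 1` into the last cell. -/
noncomputable def unitCell (n : ℕ) (t : ℝ) : Fin (n + 1) := Fin.clamp ⌊(n + 1) * t⌋₊ n

noncomputable def unitCellCenter {n : ℕ} (k : Fin (n + 1)) : ℝ := (k + 1 / 2) / (n + 1)

lemma unitCellCenter_mem_Icc {n : ℕ} (k : Fin (n + 1)) :
    unitCellCenter k ∈ Set.Icc (0 : ℝ) 1 := by
  have hk : (k : ℝ) + 1 ≤ n + 1 := by exact_mod_cast k.is_lt
  constructor
  · unfold unitCellCenter; positivity
  · rw [unitCellCenter, div_le_one (by positivity)]; linarith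

lemma abs_sub_unitCellCenter_le {n : ℕ} {t : ℝ} (ht₀ : 0 ≤ t) (ht₁ : t ≤ 1) :
    |t - unitCellCenter (unitCell n t)| ≤ 1 / (2 * (n + 1)) := by
  set k : ℕ := min ⌊(n + 1) * t⌋₊ n
  have hk : (unitCell n t : ℝ) = k := rfl
  have hlow : (k : ℝ) ≤ (n + 1) * t :=
    (Nat.cast_le.2 (min_le_left _ _)).trans (Nat.floor_le (by positivity))
  have hhigh : (n + 1) * t ≤ k + 1 := by
    rw [Nat.cast_min, ← min_add_add_right]
    exact le_min (Nat.lt_floor_add_one _).le (by nlinarith)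
  have hcenter : t - unitCellCenter (unitCell n t) = ((n + 1) * t - (k + 1 / 2)) / (n + 1) := by
    rw [unitCellCenter, hk]; field_simp
  rw [hcenter, abs_div, abs_of_pos (by positivity : (0 : ℝ) < n + 1), div_mul_eq_div_div]
  gcongr
  rw [abs_le]; constructor <;> linarith

lemma EuclideanSpace.norm_le_sqrt_card_mul {ι : Type*} [Fintype ι] {x : EuclideanSpace ℝ ι}
    {c : ℝ} (hc : 0 ≤ c) (hx : ∀ i, |x i| ≤ c) : ‖x‖ ≤ √(Fintype.card ι) * c := by
  rw [EuclideanSpace.norm_eq, ← Real.sqrt_sq hc, ← Real.sqrt_mul (Nat.cast_nonneg _)]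
  gcongr
  calc ∑ i, ‖x i‖ ^ 2 ≤ ∑ _i : ι, c ^ 2 := by
        gcongr with i; rw [Real.norm_eq_abs]; exact hx i
    _ = Fintype.card ι * c ^ 2 := by simp

noncomputable def cubeCell (n : ℕ) {d : ℕ} (x : EuclideanSpace ℝ (Fin d)) : Fin d → Fin (n + 1) :=
  fun i => unitCell n (x i)

noncomputable def cubeCellCenter {n d : ℕ} (j : Fin d → Fin (n + 1)) : EuclideanSpace ℝ (Fin d) :=
  WithLp.toLp 2 fun i => unitCellCenter (j i)

lemma inCube_cubeCellCenter {n d : ℕ} (j : Fin d → Fin (n + 1)) : inCube (cubeCellCenter j) :=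
  fun i => unitCellCenter_mem_Icc (j i)

lemma norm_sub_cubeCellCenter_le {n d : ℕ} {x : EuclideanSpace ℝ (Fin d)} (hx : inCube x) :
    ‖x - cubeCellCenter (cubeCell n x)‖ ≤ √d * (1 / (2 * (n + 1))) := by
  simpa only [Fintype.card_fin] using EuclideanSpace.norm_le_sqrt_card_mul (by positivity)
    fun i => abs_sub_unitCellCenter_le (n := n) (hx i).1 (hx i).2

lemma exists_separable_of_factors_through_fintype {X Y Z ι κ : Type*} [Fintype ι] [Fintype κ]
    (a : X → ι) (c : Z → κ) (g : ι → Y → κ → ℝ) :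
    ∃ (u : Fin (Fintype.card ι * Fintype.card κ) → X → ℝ)
      (v : Fin (Fintype.card ι * Fintype.card κ) → Y → ℝ)
      (w : Fin (Fintype.card ι * Fintype.card κ) → Z → ℝ),
      ∀ x y z, ∑ ℓ, u ℓ x * v ℓ y * w ℓ z = g (a x) y (c z) := by
  classical
  let e : Fin (Fintype.card ι * Fintype.card κ) ≃ ι × κ :=
    finProdFinEquiv.symm.trans ((Fintype.equivFin ι).symm.prodCongr (Fintype.equivFin κ).symm)
  refine ⟨fun ℓ x => if a x = (e ℓ).1 then 1 else 0, fun ℓ y => g (e ℓ).1 y (e ℓ).2,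
    fun ℓ z => if c z = (e ℓ).2 then 1 else 0, fun x y z => ?_⟩
  rw [e.sum_comp (fun p => (if a x = p.1 then 1 else 0) * g p.1 y p.2 *
    (if c z = p.2 then 1 else 0)), Fintype.sum_prod_type]
  simp [ite_mul, mul_ite]

lemma natCast_ceil_mul_add_one_le {a t : ℝ} (ha : 0 ≤ a) (ht : 1 ≤ t) :
    (⌈a * t⌉₊ : ℝ) + 1 ≤ (a + 2) * t := by
  have := Nat.ceil_lt_add_one (by positivity : 0 ≤ a * t)
  nlinarith

/-- Rank–accuracy tradeoff: an `L`-Lipschitz trivariate function is approximated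
within `ε` by a separable function of rank at most `C·(L/ε)^{d1+d3}`, for all
`ε ∈ (0, L]`. -/
theorem rank_accuracy_tradeoff (d1 d2 d3 : ℕ) :
    ∃ C : ℝ, 0 < C ∧
      ∀ (L : ℝ) (f : EuclideanSpace ℝ (Fin d1) → EuclideanSpace ℝ (Fin d2) →
          EuclideanSpace ℝ (Fin d3) → ℝ),
        (∀ θ θ' ρ ρ' ω ω', inCube θ → inCube θ' → inCube ρ → inCube ρ' →
            inCube ω → inCube ω' →
          |f θ' ρ' ω' - f θ ρ ω| ≤ L * (‖θ' - θ‖ + ‖ρ' - ρ‖ + ‖ω' - ω‖)) →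
        ∀ ε : ℝ, 0 < ε → ε ≤ L →
          ∃ (r : ℕ) (u : Fin r → EuclideanSpace ℝ (Fin d1) → ℝ)
            (v : Fin r → EuclideanSpace ℝ (Fin d2) → ℝ)
            (w : Fin r → EuclideanSpace ℝ (Fin d3) → ℝ),
            (r : ℝ) ≤ C * (L / ε) ^ (d1 + d3) ∧
            ∀ θ ρ ω, inCube θ → inCube ρ → inCube ω →
              |f θ ρ ω - ∑ ℓ, u ℓ θ * v ℓ ρ * w ℓ ω| ≤ ε := by
  refine ⟨(√d1 + √d3 + 2) ^ (d1 + d3), by positivity, fun L f hf ε hε hεL => ?_⟩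
  set n := ⌈(√d1 + √d3) * (L / ε)⌉₊
  have hn : (√d1 + √d3) * L ≤ n * ε := by
    rw [← div_le_iff₀ hε, mul_div_assoc]; exact Nat.le_ceil _
  obtain ⟨u, v, w, huvw⟩ := exists_separable_of_factors_through_fintype (cubeCell n) (cubeCell n)
    fun j ρ k => f (cubeCellCenter j) ρ (cubeCellCenter k)
  refine ⟨_, u, v, w, ?_, fun θ ρ ω hθ hρ hω => ?_⟩
  · have hLε : 1 ≤ L / ε := (one_le_div hε).2 hεL
    simp only [Fintype.card_fun, Fintype.card_fin, Nat.cast_pow, ← pow_add, ← mul_pow]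
    gcongr
    exact_mod_cast natCast_ceil_mul_add_one_le (by positivity) hLε
  · rw [huvw]
    calc |f θ ρ ω - f (cubeCellCenter (cubeCell n θ)) ρ (cubeCellCenter (cubeCell n ω))|
        ≤ L * (‖θ - cubeCellCenter (cubeCell n θ)‖ + ‖ρ - ρ‖
            + ‖ω - cubeCellCenter (cubeCell n ω)‖) :=
          hf _ _ _ _ _ _ (inCube_cubeCellCenter _) hθ hρ hρ (inCube_cubeCellCenter _) hω
      _ ≤ L * (√d1 * (1 / (2 * (n + 1))) + 0 + √d3 * (1 / (2 * (n + 1)))) := by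
          rw [sub_self, norm_zero]
          gcongr
          · linarith
          · exact norm_sub_cubeCellCenter_le hθ
          · exact norm_sub_cubeCellCenter_le hω
      _ = (√d1 + √d3) * L / (2 * (n + 1)) := by ring
      _ ≤ ε := by
          rw [div_le_iff₀ (by positivity)]
          nlinarith
end
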